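/- Let (C, W) be a split-generated category with weak equivalences, with localization γ : C → Ho(C). Then the induced functor C/∼_W → Ho(C) from the quotient of C by the homotopy congruence ∼_W (where f ∼_W g iff γf = γg) is an isomorphism of categories; equivalently, every zigzag of arrows in C (backward arrows being weak equivalences) is equal in Ho(C) to (the image of) a single forward arrow. -/

import Mathlib

open CategoryTheory

variable {C : Type*} [Category C]

/-- Arrows that are finite composites of split weak equivalences. -/
inductive SplitGenChain (W : MorphismProperty C) : ∀ {X Y : C}, (X ⟶ Y) → Prop
  | of {X Y : C} (f : X ⟶ Y) (hW : W f) (hs : IsSplitMono f ∨ IsSplitEpi f) :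
      SplitGenChain W f
  | comp {X Y Z : C} {f : X ⟶ Y} {g : Y ⟶ Z} :
      SplitGenChain W f → SplitGenChain W g → SplitGenChain W (f ≫ g)

def SplitGenerated (W : MorphismProperty C) : Prop :=
  ∀ ⦃X Y : C⦄ (f : X ⟶ Y), W f → SplitGenChain W f

/-- The homotopy congruence `∼_W`: `f ∼_W g` iff `γf = γg` in `Ho(C)`. -/
def rhoRel (W : MorphismProperty C) : HomRel C :=
  fun {_ _} f g => W.Q.map f = W.Q.map g

/- A split mono or split epi is invertible as soon as its image under a faithful functor is, and
composites of invertible arrows are invertible. So every weak equivalence becomes invertible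
in `C/∼_W`, whose functor to `Ho(C)` is faithful by definition of `∼_W`; the universal
property of `Ho(C)` then gives the inverse functor. -/

section

variable {D E : Type*} [Category D] [Category E]

lemma CategoryTheory.Functor.isIso_of_isIso_map_of_isSplit (G : D ⥤ E) [G.Faithful] {X Y : D}
    (f : X ⟶ Y) [IsIso (G.map f)] (hf : IsSplitMono f ∨ IsSplitEpi f) : IsIso f := by
  rcases hf with hf | hf
  · have : Epi f := G.epi_of_epi_map inferInstance
    exact isIso_of_epi_of_isSplitMono f
  · have : Mono f := G.mono_of_mono_map inferInstance
    exact isIso_of_mono_of_isSplitEpi f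

lemma SplitGenChain.isIso_map {W : MorphismProperty C} {F : C ⥤ D} {G : D ⥤ E} [G.Faithful]
    (hW : W.IsInvertedBy (F ⋙ G)) {X Y : C} {f : X ⟶ Y} (hf : SplitGenChain W f) :
    IsIso (F.map f) := by
  induction hf with
  | of f hWf hs =>
    have : IsIso (G.map (F.map f)) := hW f hWf
    refine G.isIso_of_isIso_map_of_isSplit _ ?_
    rcases hs with hs | hs
    · exact Or.inl inferInstance
    · exact Or.inr inferInstance
  | comp _ _ _ _ =>
    rw [F.map_comp]
    infer_instance

lemma SplitGenerated.isInvertedBy_of_comp_faithful {W : MorphismProperty C}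
    (hsg : SplitGenerated W) {F : C ⥤ D} {G : D ⥤ E} [G.Faithful]
    (hW : W.IsInvertedBy (F ⋙ G)) : W.IsInvertedBy F :=
  fun _ _ f hf => (hsg f hf).isIso_map hW

end

instance (W : MorphismProperty C) :
    (CategoryTheory.Quotient.lift (rhoRel W) W.Q fun _ _ _ _ h => h).Faithful :=
  inferInstanceAs (CategoryTheory.Quotient.lift W.Q.homRel W.Q _).Faithful

lemma quotient_functor_comp_lift_rhoRel (W : MorphismProperty C) :
    CategoryTheory.Quotient.functor (rhoRel W) ⋙
      CategoryTheory.Quotient.lift (rhoRel W) W.Q (fun _ _ _ _ h => h) = W.Q :=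
  CategoryTheory.Quotient.lift_spec _ _ _

theorem stmt7_general (W : MorphismProperty C) (hsg : SplitGenerated W) :
    ∃ ψ : W.Localization ⥤ CategoryTheory.Quotient (rhoRel W),
      (CategoryTheory.Quotient.lift (rhoRel W) W.Q (fun _ _ _ _ h => h)) ⋙ ψ =
        𝟭 (CategoryTheory.Quotient (rhoRel W)) ∧
      ψ ⋙ (CategoryTheory.Quotient.lift (rhoRel W) W.Q (fun _ _ _ _ h => h)) =
        𝟭 W.Localization := by
  have hW : W.IsInvertedBy (CategoryTheory.Quotient.functor (rhoRel W)) :=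
    hsg.isInvertedBy_of_comp_faithful (quotient_functor_comp_lift_rhoRel W ▸ W.Q_inverts)
  refine ⟨Localization.Construction.lift _ hW, CategoryTheory.Quotient.lift_unique' _ _ _ ?_,
    Localization.Construction.uniq _ _ ?_⟩
  · rw [← Functor.assoc, quotient_functor_comp_lift_rhoRel, Localization.Construction.fac,
      Functor.comp_id]
  · rw [← Functor.assoc, Localization.Construction.fac, quotient_functor_comp_lift_rhoRel,
      Functor.comp_id]

/-- Whitehead condition (2) for a split-generated category with weak equivalences:
the induced functor `C/∼_W ⟶ Ho(C)` is an isomorphism of categories. -/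
theorem stmt7 (W : MorphismProperty C) [W.ContainsIdentities]
    [W.HasTwoOutOfThreeProperty] (hsg : SplitGenerated W) :
    ∃ ψ : W.Localization ⥤ CategoryTheory.Quotient (rhoRel W),
      (CategoryTheory.Quotient.lift (rhoRel W) W.Q (fun _ _ _ _ h => h)) ⋙ ψ =
        𝟭 (CategoryTheory.Quotient (rhoRel W)) ∧
      ψ ⋙ (CategoryTheory.Quotient.lift (rhoRel W) W.Q (fun _ _ _ _ h => h)) =
        𝟭 W.Localization :=
  stmt7_general W hsg
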